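/- Let L = ⊕_{n∈ℤ} Lₙ and L′ = ⊕_{n∈ℤ} L′ₙ be ℤ-graded Lie algebras, both generated by their local parts L₋₁⊕L₀⊕L₁ and L′₋₁⊕L′₀⊕L′₁, and suppose φ: L₋₁⊕L₀⊕L₁ → L′₋₁⊕L′₀⊕L′₁ is an isomorphism of local Lie algebras. If both L and L′ are transitive, then any graded Lie algebra epimorphism Φ: L → L′ extending φ is injective, hence an isomorphism. -/

import Mathlib

/-!
The kernel of `Φ` is a graded ideal, since `Φ` preserves degrees and the grading of `L'` is
direct, so it suffices to show that `Φ` is injective on every `Lₙ`. For `n ≥ 2` a kernel element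
`x ∈ Lₙ` has `⁅x, v⁆ ∈ Lₙ₋₁` in the kernel for all `v ∈ L₋₁`; by induction these brackets
vanish, and transitivity forces `x = 0`. Negative degrees are symmetric, with `L₁` in place of
`L₋₁`, and the local part is handled by the hypothesis on `φ`.
-/

theorem LinearMap.injective_of_injective_on_pieces {ι R M N : Type*} [Ring R]
    [AddCommGroup M] [Module R M] [AddCommGroup N] [Module R N]
    {G : ι → Submodule R M} {G' : ι → Submodule R N} (hG : iSup G = ⊤) (hG' : iSupIndep G')
    (f : M →ₗ[R] N) (hf : ∀ i, G i ≤ (G' i).comap f)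
    (hinj : ∀ i, ∀ x ∈ G i, f x = 0 → x = 0) : Function.Injective f := by
  rw [← LinearMap.ker_eq_bot, eq_bot_iff]
  intro x hx
  obtain ⟨c, hc, rfl⟩ := (Submodule.mem_iSup_iff_exists_finsupp G x).mp (hG ▸ Submodule.mem_top)
  have hcomponents : ∀ i ∈ c.support, f (c i) = 0 :=
    (iSupIndep_iff_finsetSum_eq_zero_imp_eq_zero G').mp hG' c.support (fun i ↦ f (c i))
      (fun i _ ↦ hf i (hc i)) (by simpa [Finsupp.sum] using hx)
  rw [Submodule.mem_bot, Finsupp.sum]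
  exact Finset.sum_eq_zero fun i hi ↦ hinj i _ (hc i) (hcomponents i hi)

theorem LieHom.eq_zero_of_map_eq_zero_of_transitive {K L M : Type*} [CommRing K]
    [LieRing L] [LieAlgebra K L] [LieRing M] [LieAlgebra K M]
    {V : ℕ → Submodule K L} {W : Submodule K L}
    (hlower : ∀ n, ∀ u ∈ V (n + 1), ∀ v ∈ W, ⁅u, v⁆ ∈ V n)
    (htrans : ∀ n, ∀ u ∈ V (n + 1), (∀ v ∈ W, ⁅u, v⁆ = 0) → u = 0)
    (f : L →ₗ⁅K⁆ M) (hbase : ∀ x ∈ V 0, f x = 0 → x = 0) :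
    ∀ n, ∀ x ∈ V n, f x = 0 → x = 0 := by
  intro n
  induction n with
  | zero => exact hbase
  | succ n ih =>
    intro x hx hfx
    refine htrans n x hx fun v hv ↦ ih _ (hlower n x hx v hv) ?_
    rw [f.map_lie, hfx, zero_lie]

theorem LieHom.eq_zero_of_map_eq_zero_of_transitive_grading {K L M : Type*} [CommRing K]
    [LieRing L] [LieAlgebra K L] [LieRing M] [LieAlgebra K M] {G : ℤ → Submodule K L}
    (hGmul : ∀ m n : ℤ, ∀ u ∈ G m, ∀ v ∈ G n, ⁅u, v⁆ ∈ G (m + n))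
    (htrans_pos : ∀ n : ℤ, 1 ≤ n → ∀ u ∈ G n, (∀ v ∈ G (-1), ⁅u, v⁆ = 0) → u = 0)
    (htrans_neg : ∀ n : ℤ, n ≤ -1 → ∀ u ∈ G n, (∀ v ∈ G 1, ⁅u, v⁆ = 0) → u = 0)
    (f : L →ₗ⁅K⁆ M) (hloc : ∀ x ∈ G (-1) ⊔ G 0 ⊔ G 1, f x = 0 → x = 0) :
    ∀ n, ∀ x ∈ G n, f x = 0 → x = 0 := by
  have hpos : ∀ k : ℕ, ∀ x ∈ G (k + 1), f x = 0 → x = 0 := by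
    refine f.eq_zero_of_map_eq_zero_of_transitive (V := fun k ↦ G (k + 1)) (W := G (-1))
      (fun k u hu v hv ↦ ?_) (fun k u hu ↦ htrans_pos _ (by omega) u hu) ?_
    · simpa using hGmul _ _ u hu v hv
    · exact fun x hx ↦ hloc x (Submodule.mem_sup_right (by simpa using hx))
  have hneg : ∀ k : ℕ, ∀ x ∈ G (-(k + 1)), f x = 0 → x = 0 := by
    refine f.eq_zero_of_map_eq_zero_of_transitive (V := fun k ↦ G (-(k + 1))) (W := G 1)
      (fun k u hu v hv ↦ ?_) (fun k u hu ↦ htrans_neg _ (by omega) u hu) ?_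
    · convert hGmul _ _ u hu v hv using 2; push_cast; ring
    · exact fun x hx ↦ hloc x (Submodule.mem_sup_left (Submodule.mem_sup_left (by simpa using hx)))
  intro n
  obtain ⟨k, rfl | rfl⟩ := Int.eq_nat_or_neg n <;> rcases k with _ | k
  · exact fun x hx ↦ hloc x (Submodule.mem_sup_left (Submodule.mem_sup_right hx))
  · exact_mod_cast hpos k
  · exact fun x hx ↦ hloc x (Submodule.mem_sup_left (Submodule.mem_sup_right (by simpa using hx)))
  · exact_mod_cast hneg k

theorem stmt_19_general (K : Type*) [Field K]
    (L : Type*) [LieRing L] [LieAlgebra K L] (L' : Type*) [LieRing L'] [LieAlgebra K L']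
    (G : ℤ → Submodule K L) (hG : DirectSum.IsInternal G)
    (hGmul : ∀ m n : ℤ, ∀ u ∈ G m, ∀ v ∈ G n, ⁅u, v⁆ ∈ G (m + n))
    (G' : ℤ → Submodule K L') (hG' : DirectSum.IsInternal G')
    (htrans_pos : ∀ n : ℤ, 1 ≤ n → ∀ u ∈ G n, (∀ v ∈ G (-1), ⁅u, v⁆ = 0) → u = 0)
    (htrans_neg : ∀ n : ℤ, n ≤ -1 → ∀ u ∈ G n, (∀ v ∈ G 1, ⁅u, v⁆ = 0) → u = 0)
    (Φ : L →ₗ⁅K⁆ L')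
    (hgraded : ∀ n : ℤ, Submodule.map (Φ : L →ₗ[K] L') (G n) = G' n)
    (hloc : Set.InjOn Φ ((G (-1) ⊔ G 0 ⊔ G 1 : Submodule K L) : Set L)) :
    Function.Injective Φ := by
  have hloc_ker : ∀ x ∈ G (-1) ⊔ G 0 ⊔ G 1, Φ x = 0 → x = 0 := fun x hx hΦx ↦
    hloc hx (zero_mem _) (hΦx.trans Φ.map_zero.symm)
  exact LinearMap.injective_of_injective_on_pieces hG.submodule_iSup_eq_top
    hG'.submodule_iSupIndep (Φ : L →ₗ[K] L')
    (fun n ↦ Submodule.map_le_iff_le_comap.mp (hgraded n).le)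
    (Φ.eq_zero_of_map_eq_zero_of_transitive_grading hGmul htrans_pos htrans_neg hloc_ker)

/-- let L, L′ be ℤ-graded Lie algebras generated by their local parts
L₋₁⊕L₀⊕L₁ and L′₋₁⊕L′₀⊕L′₁, both transitive, and let Φ : L → L′ be a graded Lie algebra
epimorphism restricting to an isomorphism of the local parts. Then Φ is injective, hence
an isomorphism. -/
theorem stmt_19 (K : Type*) [Field K]
    (L : Type*) [LieRing L] [LieAlgebra K L] (L' : Type*) [LieRing L'] [LieAlgebra K L']
    (G : ℤ → Submodule K L) (hG : DirectSum.IsInternal G)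
    (hGmul : ∀ m n : ℤ, ∀ u ∈ G m, ∀ v ∈ G n, ⁅u, v⁆ ∈ G (m + n))
    (G' : ℤ → Submodule K L') (hG' : DirectSum.IsInternal G')
    (hG'mul : ∀ m n : ℤ, ∀ u ∈ G' m, ∀ v ∈ G' n, ⁅u, v⁆ ∈ G' (m + n))
    (hgen : LieSubalgebra.lieSpan K L ((G (-1) : Set L) ∪ (G 0 : Set L) ∪ (G 1 : Set L)) = ⊤)
    (hgen' : LieSubalgebra.lieSpan K L'
      ((G' (-1) : Set L') ∪ (G' 0 : Set L') ∪ (G' 1 : Set L')) = ⊤)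
    (htrans_pos : ∀ n : ℤ, 1 ≤ n → ∀ u ∈ G n, (∀ v ∈ G (-1), ⁅u, v⁆ = 0) → u = 0)
    (htrans_neg : ∀ n : ℤ, n ≤ -1 → ∀ u ∈ G n, (∀ v ∈ G 1, ⁅u, v⁆ = 0) → u = 0)
    (htrans_pos' : ∀ n : ℤ, 1 ≤ n → ∀ u ∈ G' n, (∀ v ∈ G' (-1), ⁅u, v⁆ = 0) → u = 0)
    (htrans_neg' : ∀ n : ℤ, n ≤ -1 → ∀ u ∈ G' n, (∀ v ∈ G' 1, ⁅u, v⁆ = 0) → u = 0)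
    (Φ : L →ₗ⁅K⁆ L') (hsurj : Function.Surjective Φ)
    (hgraded : ∀ n : ℤ, Submodule.map (Φ : L →ₗ[K] L') (G n) = G' n)
    (hloc : Set.InjOn Φ ((G (-1) ⊔ G 0 ⊔ G 1 : Submodule K L) : Set L)) :
    Function.Injective Φ :=
  stmt_19_general K L L' G hG hGmul G' hG' htrans_pos htrans_neg Φ hgraded hloc
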